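/- Equivalent Partial Grounding: For any set C of completeness statements, graph G, and partially mapped BGP (P, ν), the singleton {(P, ν)} is equivalent wrt C and G to the set epg((P,ν), C, G) = {(μP, ν ∪ μ) | μ ∈ ⟦cruc(P, C, G)⟧_G}; that is, for every extension pair (G, G') valid wrt C, the evaluation of (P, ν) over G' equals the union of evaluations of the instantiated partially mapped BGPs over G'. -/
import Mathlib


/-- Constants (IRIs/literals) -/
abbrev Const := ℕ
/-- Variables -/
abbrev Var := ℕ

/-- A term is a constant or a variable. -/
inductive Term where
  | c : Const → Term
  | v : Var → Term
deriving DecidableEq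

/-- Triple pattern -/
abbrev TP := Term × Term × Term
/-- Basic graph pattern (also used for graphs, as sets of ground triple patterns) -/
abbrev BGP := Set TP
/-- (Partial) mapping from variables to constants -/
abbrev Mapping := Var → Option Const

def termVars : Term → Set Var
  | .c _ => ∅
  | .v x => {x}

def tpVars (t : TP) : Set Var := termVars t.1 ∪ termVars t.2.1 ∪ termVars t.2.2

def bgpVars (P : BGP) : Set Var := ⋃ t ∈ P, tpVars t

def termConsts : Term → Set Const
  | .c a => {a}
  | .v _ => ∅

def tpConsts (t : TP) : Set Const := termConsts t.1 ∪ termConsts t.2.1 ∪ termConsts t.2.2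

def bgpConsts (P : BGP) : Set Const := ⋃ t ∈ P, tpConsts t

/-- A graph is a BGP all of whose triples are ground. -/
def GroundBGP (P : BGP) : Prop := ∀ t ∈ P, tpVars t = ∅

def applyTerm (μ : Mapping) : Term → Term
  | .c a => .c a
  | .v x =>
    match μ x with
    | some a => .c a
    | none => .v x

def applyTP (μ : Mapping) (t : TP) : TP :=
  (applyTerm μ t.1, applyTerm μ t.2.1, applyTerm μ t.2.2)

def applyBGP (μ : Mapping) (P : BGP) : BGP := applyTP μ '' P

/-- Domain of a mapping -/
def mdom (μ : Mapping) : Set Var := {x | μ x ≠ none}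

/-- Evaluation of a BGP over a graph: ⟦P⟧_G = {μ | dom(μ) = var(P), μP ⊆ G}. -/
def bgpEval (P G : BGP) : Set Mapping := {μ | mdom μ = bgpVars P ∧ applyBGP μ P ⊆ G}

/-- A completeness statement Compl(P_C). -/
structure CS where
  pat : BGP

/-- The CONSTRUCT query associated to a completeness statement. -/
def constructQ (C : CS) (G : BGP) : BGP := ⋃ μ ∈ bgpEval C.pat G, applyBGP μ C.pat

/-- Transfer operator T_𝒞. -/
def transfer (𝒞 : Set CS) (G : BGP) : BGP := ⋃ C ∈ 𝒞, constructQ C G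

/-- (G, G') is a valid extension pair wrt 𝒞. -/
def Valid (𝒞 : Set CS) (G G' : BGP) : Prop :=
  G ⊆ G' ∧ GroundBGP G' ∧ transfer 𝒞 G' ⊆ G

/-- 𝒞, G ⊨ Compl(P). -/
def Entails (𝒞 : Set CS) (G : BGP) (P : BGP) : Prop :=
  ∀ G', Valid 𝒞 G G' → bgpEval P G' = bgpEval P G

def emptyMap : Mapping := fun _ => none

/-- Union of two mappings (left-biased; used on mappings with disjoint domains). -/
def munion (μ ν : Mapping) : Mapping := fun x => (μ x).orElse (fun _ => ν x)

/-- Partially mapped BGP -/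
abbrev PMBGP := BGP × Mapping

/-- Evaluation of a partially mapped BGP: ⟦(P, ν)⟧_G = {ν ∪ ρ | ρ ∈ ⟦P⟧_G}. -/
def evalPM (pm : PMBGP) (G : BGP) : Set Mapping :=
  {σ | ∃ ρ ∈ bgpEval pm.1 G, σ = munion pm.2 ρ}

def evalPMSet (S : Set PMBGP) (G : BGP) : Set Mapping := ⋃ pm ∈ S, evalPM pm G

/-- S ≡_{𝒞,G} S' : equal evaluations over every valid extension pair. -/
def EquivCG (𝒞 : Set CS) (G : BGP) (S S' : Set PMBGP) : Prop :=
  ∀ G', Valid 𝒞 G G' → evalPMSet S G' = evalPMSet S' G'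

/-- The freeze mapping, sending each variable to a (fresh) constant. -/
def freezeMap (frz : Var → Const) : Mapping := fun x => some (frz x)

/-- frz is a genuine freeze mapping: injective and its values are fresh. -/
def Fresh (frz : Var → Const) (𝒞 : Set CS) (G P : BGP) : Prop :=
  Function.Injective frz ∧
    ∀ x, frz x ∉ bgpConsts G ∪ bgpConsts P ∪ ⋃ C ∈ 𝒞, bgpConsts C.pat

/-- Crucial part: cruc(P, 𝒞, G) = P ∩ id̃⁻¹(T_𝒞(P̃ ∪ G)). -/
def cruc (P : BGP) (𝒞 : Set CS) (G : BGP) (frz : Var → Const) : BGP :=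
  {t | t ∈ P ∧ applyTP (freezeMap frz) t ∈ transfer 𝒞 (applyBGP (freezeMap frz) P ∪ G)}

/-- Equivalent partial grounding operator. -/
def epg (pm : PMBGP) (𝒞 : Set CS) (G : BGP) (frz : Var → Const) : Set PMBGP :=
  {q | ∃ μ ∈ bgpEval (cruc pm.1 𝒞 G frz) G, q = (applyBGP μ pm.1, munion pm.2 μ)}

/-- A partially mapped BGP is saturated wrt 𝒞 and G. -/
def Saturated (pm : PMBGP) (𝒞 : Set CS) (G : BGP) (frz : Var → Const) : Prop :=
  epg pm 𝒞 G frz = {pm}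

/-- Partially mapped BGPs reachable from (P, ∅) by the saturation algorithm's epg steps. -/
inductive Reach (𝒞 : Set CS) (G : BGP) (frz : Var → Const) (P : BGP) : PMBGP → Prop where
  | init : Reach 𝒞 G frz P (P, emptyMap)
  | step {pm pm' : PMBGP} : Reach 𝒞 G frz P pm → epg pm 𝒞 G frz ≠ {pm} →
      pm' ∈ epg pm 𝒞 G frz → Reach 𝒞 G frz P pm'

/-- The set Ω of mappings returned by the saturation algorithm sat(P, 𝒞, G). -/
def satSet (𝒞 : Set CS) (G : BGP) (frz : Var → Const) (P : BGP) : Set Mapping :=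
  {ν | ∃ P', Reach 𝒞 G frz P (P', ν) ∧ Saturated (P', ν) 𝒞 G frz}


/-! ### Auxiliary lemmas -/

open Classical

lemma munion_assoc (a b c : Mapping) : munion (munion a b) c = munion a (munion b c) := by
  funext x
  simp only [munion]
  cases a x <;> simp [Option.orElse]

lemma mdom_munion (μ ρ : Mapping) : mdom (munion μ ρ) = mdom μ ∪ mdom ρ := by
  ext x
  simp only [mdom, munion, Set.mem_setOf_eq, Set.mem_union]
  cases μ x <;> simp [Option.orElse]

lemma applyTerm_munion (μ ρ : Mapping) (t : Term) :
    applyTerm (munion μ ρ) t = applyTerm ρ (applyTerm μ t) := by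
  cases t with
  | c a => rfl
  | v x =>
    simp only [applyTerm, munion]
    cases h : μ x <;> simp [applyTerm, Option.orElse]

lemma applyTP_munion (μ ρ : Mapping) (t : TP) :
    applyTP (munion μ ρ) t = applyTP ρ (applyTP μ t) := by
  simp [applyTP, applyTerm_munion]

lemma applyBGP_munion (μ ρ : Mapping) (P : BGP) :
    applyBGP (munion μ ρ) P = applyBGP ρ (applyBGP μ P) := by
  simp only [applyBGP, Set.image_image]
  exact Set.image_congr fun t _ => applyTP_munion μ ρ t

lemma termVars_applyTerm (μ : Mapping) (t : Term) :
    termVars (applyTerm μ t) = termVars t \ mdom μ := by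
  cases t with
  | c a => simp [applyTerm, termVars]
  | v x =>
    simp only [applyTerm]
    cases h : μ x with
    | some a =>
      have : x ∈ mdom μ := by simp [mdom, h]
      simp only [termVars]
      ext y
      simp only [Set.mem_empty_iff_false, Set.mem_diff, Set.mem_singleton_iff, false_iff,
        not_and, not_not]
      rintro rfl; exact this
    | none =>
      have : x ∉ mdom μ := by simp [mdom, h]
      simp [termVars]
      ext y; simp; intro hy; subst hy; exact this

lemma tpVars_applyTP (μ : Mapping) (t : TP) :
    tpVars (applyTP μ t) = tpVars t \ mdom μ := by
  simp [tpVars, applyTP, termVars_applyTerm, Set.union_diff_distrib]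

lemma bgpVars_applyBGP (μ : Mapping) (P : BGP) :
    bgpVars (applyBGP μ P) = bgpVars P \ mdom μ := by
  ext x
  simp only [bgpVars, applyBGP, Set.mem_iUnion, Set.mem_image, Set.mem_diff]
  constructor
  · rintro ⟨t', ⟨⟨t, ht, rfl⟩, hx⟩⟩
    rw [tpVars_applyTP] at hx
    exact ⟨⟨t, ⟨ht, hx.1⟩⟩, hx.2⟩
  · rintro ⟨⟨t, ht, hx⟩, hnd⟩
    exact ⟨applyTP μ t, ⟨⟨t, ht, rfl⟩, by rw [tpVars_applyTP]; exact ⟨hx, hnd⟩⟩⟩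

lemma bgpVars_mono {P Q : BGP} (h : P ⊆ Q) : bgpVars P ⊆ bgpVars Q := by
  intro x hx
  simp only [bgpVars, Set.mem_iUnion] at *
  obtain ⟨t, ht, hx⟩ := hx
  exact ⟨t, h ht, hx⟩

lemma tpVars_subset_bgpVars {t : TP} {P : BGP} (h : t ∈ P) : tpVars t ⊆ bgpVars P := by
  intro x hx; simp only [bgpVars, Set.mem_iUnion]; exact ⟨t, h, hx⟩

lemma tpConsts_subset_bgpConsts {t : TP} {P : BGP} (h : t ∈ P) : tpConsts t ⊆ bgpConsts P := by
  intro a ha; simp only [bgpConsts, Set.mem_iUnion]; exact ⟨t, h, ha⟩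

lemma applyTerm_congr {μ ρ : Mapping} {t : Term} (h : ∀ x ∈ termVars t, μ x = ρ x) :
    applyTerm μ t = applyTerm ρ t := by
  cases t with
  | c a => rfl
  | v x => simp only [applyTerm]; rw [h x (by simp [termVars])]

lemma applyTP_congr {μ ρ : Mapping} {t : TP} (h : ∀ x ∈ tpVars t, μ x = ρ x) :
    applyTP μ t = applyTP ρ t := by
  simp only [applyTP]
  refine congrArg₂ _ ?_ (congrArg₂ _ ?_ ?_) <;>
    exact applyTerm_congr fun x hx => h x (by simp [tpVars]; tauto)

/-- Restriction of a mapping to a set of variables. -/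
noncomputable def restrictM (ρ : Mapping) (S : Set Var) : Mapping :=
  fun x => if x ∈ S then ρ x else none

lemma mdom_restrictM (ρ : Mapping) (S : Set Var) : mdom (restrictM ρ S) = mdom ρ ∩ S := by
  ext x
  simp only [mdom, restrictM, Set.mem_setOf_eq, Set.mem_inter_iff]
  by_cases h : x ∈ S <;> simp [h]

/-- Unfreezing a constant: replace `frz x` by the value of `ρ x`. -/
noncomputable def ufConst (frz : Var → Const) (ρ : Mapping) (a : Const) : Const :=
  if h : ∃ x, frz x = a then (ρ h.choose).getD a else a

noncomputable def ufTerm (frz : Var → Const) (ρ : Mapping) : Term → Term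
  | .c a => .c (ufConst frz ρ a)
  | .v x => .v x

noncomputable def ufTP (frz : Var → Const) (ρ : Mapping) (t : TP) : TP :=
  (ufTerm frz ρ t.1, ufTerm frz ρ t.2.1, ufTerm frz ρ t.2.2)

noncomputable def ufMap (frz : Var → Const) (ρ θ : Mapping) : Mapping :=
  fun y => (θ y).map (ufConst frz ρ)

lemma mdom_ufMap (frz : Var → Const) (ρ θ : Mapping) : mdom (ufMap frz ρ θ) = mdom θ := by
  ext y
  simp only [mdom, ufMap, Set.mem_setOf_eq]
  cases θ y <;> simp

lemma ufConst_fix {frz : Var → Const} {ρ : Mapping} {a : Const} (h : ∀ x, frz x ≠ a) :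
    ufConst frz ρ a = a := by
  rw [ufConst, dif_neg]
  rintro ⟨x, hx⟩
  exact h x hx

lemma ufTP_fix {frz : Var → Const} {ρ : Mapping} {t : TP}
    (h : ∀ a ∈ tpConsts t, ∀ x, frz x ≠ a) : ufTP frz ρ t = t := by
  obtain ⟨t1, t2, t3⟩ := t
  simp only [ufTP]
  refine congrArg₂ _ ?_ (congrArg₂ _ ?_ ?_) <;>
  · first
    | (cases t1 with
       | c a => exact congrArg _ (ufConst_fix fun x => h a (by simp [tpConsts, termConsts]) x)
       | v x => rfl)
    | (cases t2 with
       | c a => exact congrArg _ (ufConst_fix fun x => h a (by simp [tpConsts, termConsts]) x)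
       | v x => rfl)
    | (cases t3 with
       | c a => exact congrArg _ (ufConst_fix fun x => h a (by simp [tpConsts, termConsts]) x)
       | v x => rfl)

lemma uf_applyTerm {frz : Var → Const} {ρ θ : Mapping} {u : Term}
    (hv : termVars u ⊆ mdom θ) (hc : ∀ a ∈ termConsts u, ∀ x, frz x ≠ a) :
    applyTerm (ufMap frz ρ θ) u = ufTerm frz ρ (applyTerm θ u) := by
  cases u with
  | c a =>
    simp [applyTerm, ufTerm, ufConst_fix (hc a (by simp [termConsts]))]
  | v y =>
    have : y ∈ mdom θ := hv (by simp [termVars])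
    simp only [mdom, Set.mem_setOf_eq] at this
    cases h : θ y with
    | none => exact absurd h this
    | some b => simp [applyTerm, ufMap, h, ufTerm]

lemma uf_applyTP {frz : Var → Const} {ρ θ : Mapping} {u : TP}
    (hv : tpVars u ⊆ mdom θ) (hc : ∀ a ∈ tpConsts u, ∀ x, frz x ≠ a) :
    applyTP (ufMap frz ρ θ) u = ufTP frz ρ (applyTP θ u) := by
  obtain ⟨u1, u2, u3⟩ := u
  simp only [applyTP, ufTP]
  refine congrArg₂ _ ?_ (congrArg₂ _ ?_ ?_) <;>
    refine uf_applyTerm (fun x hx => hv (by simp [tpVars]; tauto))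
      (fun a ha => hc a (by simp [tpConsts]; tauto))

lemma ufTerm_freeze {frz : Var → Const} {ρ : Mapping} {s : Term}
    (hinj : Function.Injective frz) (hv : termVars s ⊆ mdom ρ)
    (hc : ∀ a ∈ termConsts s, ∀ x, frz x ≠ a) :
    ufTerm frz ρ (applyTerm (freezeMap frz) s) = applyTerm ρ s := by
  cases s with
  | c a => simp [applyTerm, ufTerm, ufConst_fix (hc a (by simp [termConsts]))]
  | v x =>
    have hx : x ∈ mdom ρ := hv (by simp [termVars])
    simp only [mdom, Set.mem_setOf_eq] at hx
    obtain ⟨b, hb⟩ := Option.ne_none_iff_exists'.mp hx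
    have hex : ∃ y, frz y = frz x := ⟨x, rfl⟩
    have hch : hex.choose = x := hinj hex.choose_spec
    simp [applyTerm, freezeMap, ufTerm, ufConst, dif_pos hex, hch, hb]

lemma ufTP_freeze {frz : Var → Const} {ρ : Mapping} {s : TP}
    (hinj : Function.Injective frz) (hv : tpVars s ⊆ mdom ρ)
    (hc : ∀ a ∈ tpConsts s, ∀ x, frz x ≠ a) :
    ufTP frz ρ (applyTP (freezeMap frz) s) = applyTP ρ s := by
  obtain ⟨s1, s2, s3⟩ := s
  simp only [applyTP, ufTP]
  refine congrArg₂ _ ?_ (congrArg₂ _ ?_ ?_) <;>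
    refine ufTerm_freeze hinj (fun x hx => hv (by simp [tpVars]; tauto))
      (fun a ha => hc a (by simp [tpConsts]; tauto))

/-- Key lemma: any solution mapping of `P` over a valid extension `G'` maps every
triple in the crucial part into `G` itself. -/
lemma cruc_into_G {𝒞 : Set CS} {G : BGP} {frz : Var → Const} {P : BGP}
    (hfresh : Fresh frz 𝒞 G P) {G' : BGP} (hval : Valid 𝒞 G G') {ρ : Mapping}
    (hdom : bgpVars P ⊆ mdom ρ) (hρ : applyBGP ρ P ⊆ G') :
    ∀ t ∈ cruc P 𝒞 G frz, applyTP ρ t ∈ G := by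
  obtain ⟨hinj, hfr⟩ := hfresh
  obtain ⟨hGG', _, hT⟩ := hval
  intro t ht
  obtain ⟨htP, htc⟩ := ht
  -- unpack membership in transfer
  simp only [transfer, constructQ, Set.mem_iUnion] at htc
  obtain ⟨C, hC, θ, hθ, hmem⟩ := htc
  obtain ⟨hθdom, hθsub⟩ := hθ
  obtain ⟨u, hu, huθ⟩ := hmem
  -- the unfrozen mapping
  set θ' : Mapping := ufMap frz ρ θ with hθ'
  have hfrC : ∀ a ∈ bgpConsts C.pat, ∀ x, frz x ≠ a := by
    intro a ha x hax
    refine hfr x (Set.mem_union_right _ ?_)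
    subst hax
    simp only [Set.mem_iUnion]
    exact ⟨C, hC, ha⟩
  have hfrG : ∀ a ∈ bgpConsts G, ∀ x, frz x ≠ a := fun a ha x hax =>
    hfr x (Set.mem_union_left _ (Set.mem_union_left _ (hax ▸ ha)))
  have hfrP : ∀ a ∈ bgpConsts P, ∀ x, frz x ≠ a := fun a ha x hax =>
    hfr x (Set.mem_union_left _ (Set.mem_union_right _ (hax ▸ ha)))
  -- θ' is a solution of C.pat over G'
  have hθ'G' : θ' ∈ bgpEval C.pat G' := by
    constructor
    · rw [hθ', mdom_ufMap, hθdom]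
    · rintro _ ⟨w, hw, rfl⟩
      rw [hθ', uf_applyTP (hθdom ▸ tpVars_subset_bgpVars hw)
        (fun a ha => hfrC a (tpConsts_subset_bgpConsts hw ha))]
      have hwmem : applyTP θ w ∈ applyBGP (freezeMap frz) P ∪ G :=
        hθsub ⟨w, hw, rfl⟩
      rcases hwmem with hl | hr
      · obtain ⟨s, hs, hse⟩ := hl
        rw [← hse, ufTP_freeze hinj
          (le_trans (tpVars_subset_bgpVars hs) hdom)
          (fun a ha => hfrP a (tpConsts_subset_bgpConsts hs ha))]
        exact hρ ⟨s, hs, rfl⟩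
      · rw [ufTP_fix (fun a ha => hfrG a (tpConsts_subset_bgpConsts hr ha))]
        exact hGG' hr
  -- applyTP ρ t is produced by θ' over G'
  have : applyTP ρ t ∈ transfer 𝒞 G' := by
    simp only [transfer, constructQ, Set.mem_iUnion]
    refine ⟨C, hC, θ', hθ'G', u, hu, ?_⟩
    rw [hθ', uf_applyTP (hθdom ▸ tpVars_subset_bgpVars hu)
      (fun a ha => hfrC a (tpConsts_subset_bgpConsts hu ha)), huθ,
      ufTP_freeze hinj (le_trans (tpVars_subset_bgpVars htP) hdom)
      (fun a ha => hfrP a (tpConsts_subset_bgpConsts htP ha))]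
  exact hT this

/-- Equivalent Partial Grounding: {(P, ν)} ≡_{𝒞,G} epg((P,ν), 𝒞, G). -/
theorem stmt5 (𝒞 : Set CS) (G : BGP) (frz : Var → Const) (P : BGP) (ν : Mapping)
    (hg : GroundBGP G) (hfresh : Fresh frz 𝒞 G P)
    (hdisj : mdom ν ∩ bgpVars P = ∅) :
    EquivCG 𝒞 G {(P, ν)} (epg (P, ν) 𝒞 G frz) := by
  intro G' hval
  have hPcP : cruc P 𝒞 G frz ⊆ P := fun t ht => ht.1
  have hvsub : bgpVars (cruc P 𝒞 G frz) ⊆ bgpVars P := bgpVars_mono hPcP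
  ext σ
  simp only [evalPMSet, Set.mem_iUnion, Set.mem_singleton_iff, exists_prop]
  constructor
  · rintro ⟨pm, hpm, hσ⟩
    subst hpm
    obtain ⟨ρ, ⟨hρdom, hρsub⟩, rfl⟩ := hσ
    set Pc := cruc P 𝒞 G frz with hPc
    set μ := restrictM ρ (bgpVars Pc) with hμdef
    set ρ' := restrictM ρ (bgpVars P \ bgpVars Pc) with hρ'def
    have hμdom : mdom μ = bgpVars Pc := by
      rw [hμdef, mdom_restrictM, hρdom, Set.inter_eq_right.mpr hvsub]
    have hρ'dom : mdom ρ' = bgpVars P \ bgpVars Pc := by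
      rw [hρ'def, mdom_restrictM, hρdom, Set.inter_eq_right.mpr Set.diff_subset]
    have hunion : munion μ ρ' = ρ := by
      funext x
      by_cases h1 : x ∈ bgpVars Pc
      · simp only [munion, hμdef, restrictM, if_pos h1]
        cases h : ρ x with
        | some a => rfl
        | none => simp [hρ'def, restrictM, h]
      · by_cases h2 : x ∈ bgpVars P
        · simp [munion, hμdef, hρ'def, restrictM, if_neg h1, h2, Option.orElse]
        · have : ρ x = none := by
            by_contra h
            exact h2 (hρdom ▸ (Set.mem_setOf_eq ▸ h : x ∈ mdom ρ))
          simp [munion, hμdef, hρ'def, restrictM, if_neg h1, h2, this, Option.orElse]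
    have hμ : μ ∈ bgpEval Pc G := by
      refine ⟨hμdom, ?_⟩
      rintro _ ⟨t, ht, rfl⟩
      have : applyTP μ t = applyTP ρ t := by
        refine applyTP_congr fun x hx => ?_
        simp [hμdef, restrictM, if_pos (tpVars_subset_bgpVars ht hx)]
      rw [this]
      exact cruc_into_G hfresh hval (le_of_eq hρdom.symm) hρsub t ht
    have hρ' : ρ' ∈ bgpEval (applyBGP μ P) G' := by
      constructor
      · rw [bgpVars_applyBGP, hμdom, hρ'dom]
      · rw [← applyBGP_munion, hunion]
        exact hρsub
    refine ⟨(applyBGP μ P, munion ν μ), ⟨μ, hμ, rfl⟩, ρ', hρ', ?_⟩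
    rw [munion_assoc, hunion]
  · rintro ⟨pm, hpm, hσ⟩
    obtain ⟨μ, ⟨hμdom, hμsub⟩, rfl⟩ := hpm
    obtain ⟨ρ', ⟨hρ'dom, hρ'sub⟩, rfl⟩ := hσ
    refine ⟨(P, ν), rfl, munion μ ρ', ⟨?_, ?_⟩, munion_assoc ν μ ρ'⟩
    · rw [mdom_munion, hμdom, hρ'dom, bgpVars_applyBGP, hμdom]
      exact Set.union_diff_cancel hvsub
    · rw [applyBGP_munion]
      exact hρ'sub
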